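/- For all p ≥ 1, n ≥ 1 and 1 ≤ i, j ≤ n−1, the matrices h_k^n satisfy the Temperley–Lieb relations: h_i^n · h_j^n = h_j^n · h_i^n whenever |i − j| ≥ 2; h_i^n · h_{i+1}^n · h_i^n = h_i^n and h_{i+1}^n · h_i^n · h_{i+1}^n = h_{i+1}^n; and h_i^n · h_i^n = p · h_i^n. -/

import Mathlib

open Matrix

/-- The Kronecker product of an `a × b` matrix and a `c × d` matrix, as an
`(a·c) × (b·d)` matrix: the entry at row `r = r₁·c + r₂` and column `s = s₁·d + s₂`
(with `r₂ < c`, `s₂ < d`) is `A r₁ s₁ * B r₂ s₂`. -/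
def kron {F : Type*} [Mul F] {a b c d : ℕ}
    (A : Matrix (Fin a) (Fin b) F) (B : Matrix (Fin c) (Fin d) F) :
    Matrix (Fin (a * c)) (Fin (b * d)) F :=
  Matrix.of fun r s => A r.divNat s.divNat * B r.modNat s.modNat

/-- The `1 × p²` matrix `E_p`, whose entry in column `(i−1)p + j` (for `1 ≤ i, j ≤ p`)
is `1` if `i = j` and `0` otherwise. -/
def Ep (F : Type*) [Zero F] [One F] (p : ℕ) : Matrix (Fin 1) (Fin (p * p)) F :=
  Matrix.of fun _ s => if s.divNat = s.modNat then 1 else 0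

/-- The `m × p²m` matrix `φ_m = E_p ⊗ 1_m` (the counit of the self-adjunction of the
functor `p ⊗` on matrices). -/
def phiMat (F : Type*) [Semiring F] (p m : ℕ) : Matrix (Fin m) (Fin (p * p * m)) F :=
  Matrix.reindex (finCongr (Nat.one_mul m)) (Equiv.refl _)
    (kron (Ep F p) (1 : Matrix (Fin m) (Fin m) F))

/-- The `p²m × m` matrix `γ_m = E_p' ⊗ 1_m`, where `E_p'` is the transpose of `E_p`
(the unit of the self-adjunction of the functor `p ⊗` on matrices). -/
def gammaMat (F : Type*) [Semiring F] (p m : ℕ) : Matrix (Fin (p * p * m)) (Fin m) F :=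
  Matrix.reindex (Equiv.refl _) (finCongr (Nat.one_mul m))
    (kron (Ep F p)ᵀ (1 : Matrix (Fin m) (Fin m) F))

/-- The `p^n × p^n` matrix `h_k^n = 1_{p^{n−k−1}} ⊗ (E_p' · E_p) ⊗ 1_{p^{k−1}}`
(for `1 ≤ k ≤ n − 1`), reindexed along `p^{n−k−1} · p² · p^{k−1} = p^n`. -/
def hMat (F : Type*) [Semiring F] (p n k : ℕ) (h1 : 1 ≤ k) (h2 : k < n) :
    Matrix (Fin (p ^ n)) (Fin (p ^ n)) F :=
  Matrix.reindex
    (finCongr (by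
      have h : n - k - 1 + 2 + (k - 1) = n := by omega
      calc p ^ (n - k - 1) * (p * p) * p ^ (k - 1)
          = p ^ (n - k - 1) * p ^ 2 * p ^ (k - 1) := by rw [← pow_two]
        _ = p ^ (n - k - 1 + 2 + (k - 1)) := by rw [← pow_add, ← pow_add]
        _ = p ^ n := by rw [h]))
    (finCongr (by
      have h : n - k - 1 + 2 + (k - 1) = n := by omega
      calc p ^ (n - k - 1) * (p * p) * p ^ (k - 1)
          = p ^ (n - k - 1) * p ^ 2 * p ^ (k - 1) := by rw [← pow_two]
        _ = p ^ (n - k - 1 + 2 + (k - 1)) := by rw [← pow_add, ← pow_add]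
        _ = p ^ n := by rw [h]))
    (kron (kron (1 : Matrix (Fin (p ^ (n - k - 1))) (Fin (p ^ (n - k - 1))) F)
        ((Ep F p)ᵀ * Ep F p))
      (1 : Matrix (Fin (p ^ (k - 1))) (Fin (p ^ (k - 1))) F))

/-!
Index `Fin (p ^ n)` by base-`p` digit strings `Fin n → Fin p`. Then `h_k^n` is the 0/1 matrix of
the relation `CupCap (k - 1) k`: two strings agree off the positions `k - 1, k`, and each of them
is constant on these two positions (the cap `E_p` and the cup `E_p'`). The entries of a product
of two such matrices count middle strings. In each Temperley–Lieb relation the middle string is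
either forced, so the product is the matrix of the composite relation, or it is free exactly in
one constant digit pair, which produces the factor `p`.
-/

open Finset

namespace Nat

variable {p x y : ℕ}

lemma eq_of_forall_div_pow_mod_eq {N : ℕ} (hx : x < p ^ N) (hy : y < p ^ N)
    (h : ∀ m < N, x / p ^ m % p = y / p ^ m % p) : x = y := by
  have : finFunctionFinEquiv.symm ⟨x, hx⟩ = finFunctionFinEquiv.symm ⟨y, hy⟩ :=
    funext fun m => Fin.ext <| by simpa using h m m.2
  simpa using this

lemma div_pow_eq_div_pow_iff (hp : 0 < p) {n j : ℕ} (hx : x < p ^ n) (hy : y < p ^ n) :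
    x / p ^ j = y / p ^ j ↔ ∀ m < n, j ≤ m → x / p ^ m % p = y / p ^ m % p := by
  have shift : ∀ z m, z / p ^ j / p ^ m = z / p ^ (j + m) := fun z m => by
    rw [Nat.div_div_eq_div_mul, pow_add]
  constructor
  · intro h m _ hjm
    obtain ⟨m, rfl⟩ := Nat.exists_eq_add_of_le hjm
    rw [← shift, ← shift, h]
  · intro h
    refine eq_of_forall_div_pow_mod_eq ((Nat.div_le_self _ _).trans_lt hx)
      ((Nat.div_le_self _ _).trans_lt hy) fun m _ => ?_
    rw [shift, shift]
    by_cases hjm : j + m < n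
    · exact h _ hjm (Nat.le_add_right j m)
    · have hle : p ^ n ≤ p ^ (j + m) := Nat.pow_le_pow_right hp (by omega)
      rw [Nat.div_eq_of_lt (hx.trans_le hle), Nat.div_eq_of_lt (hy.trans_le hle)]

lemma mod_pow_div_pow_mod {j m : ℕ} (hm : m < j) :
    x % p ^ j / p ^ m % p = x / p ^ m % p := by
  rw [show j = m + (j - m) by omega, pow_add, Nat.mod_mul_right_div_self,
    Nat.mod_mod_of_dvd _ (dvd_pow_self p (by omega))]

lemma mod_pow_eq_mod_pow_iff (hp : 0 < p) {j : ℕ} :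
    x % p ^ j = y % p ^ j ↔ ∀ m < j, x / p ^ m % p = y / p ^ m % p := by
  refine ⟨fun h m hm => ?_, fun h => ?_⟩
  · rw [← mod_pow_div_pow_mod hm, h, mod_pow_div_pow_mod hm]
  · refine eq_of_forall_div_pow_mod_eq (Nat.mod_lt _ (pow_pos hp j))
      (Nat.mod_lt _ (pow_pos hp j)) fun m hm => ?_
    rw [mod_pow_div_pow_mod hm, mod_pow_div_pow_mod hm, h m hm]

end Nat

namespace TemperleyLieb

section RelMatrix

variable (F : Type*) [Semiring F] {κ κ' κ'' : Type*}

open scoped Classical in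
noncomputable def relMatrix (R : κ → κ' → Prop) : Matrix κ κ' F :=
  of fun x y => if R x y then 1 else 0

variable {F}

open scoped Classical in
lemma relMatrix_apply (R : κ → κ' → Prop) (x : κ) (y : κ') :
    relMatrix F R x y = if R x y then 1 else 0 := rfl

open scoped Classical in
lemma relMatrix_mul_relMatrix_apply [Fintype κ'] (R : κ → κ' → Prop) (S : κ' → κ'' → Prop)
    (x : κ) (z : κ'') :
    (relMatrix F R * relMatrix F S) x z = #{t | R x t ∧ S t z} := by
  simp only [mul_apply, relMatrix_apply, ite_zero_mul_ite_zero, mul_one, sum_boole]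

lemma relMatrix_mul_relMatrix [Fintype κ'] {R : κ → κ' → Prop} {S : κ' → κ'' → Prop}
    (f : κ → κ'' → κ') (hf : ∀ x t z, R x t → S t z → t = f x z) :
    relMatrix F R * relMatrix F S = relMatrix F (Relation.Comp R S) := by
  classical
  ext x z
  rw [relMatrix_mul_relMatrix_apply, relMatrix_apply]
  split_ifs with h
  · obtain ⟨t, hxt, htz⟩ := h
    have hsingle : ({t' | R x t' ∧ S t' z} : Finset κ') = {t} := by
      refine eq_singleton_iff_unique_mem.mpr ⟨by simp [hxt, htz], fun t' ht' => ?_⟩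
      simp only [mem_filter, mem_univ, true_and] at ht'
      rw [hf x t z hxt htz, hf x t' z ht'.1 ht'.2]
    simp [hsingle]
  · rw [filter_eq_empty_iff.mpr fun t _ ht => h ⟨t, ht⟩, card_empty, Nat.cast_zero]

end RelMatrix

section CupCap

variable {ι α : Type*}

def CupCap (a b : ι) (x y : ι → α) : Prop :=
  x a = x b ∧ y a = y b ∧ ∀ m, m ≠ a → m ≠ b → x m = y m

lemma cupCap_comm (a b : ι) : CupCap (α := α) a b = CupCap b a := by
  ext x y
  simp only [CupCap]
  grind

lemma CupCap.trans {a b : ι} {x t y : ι → α} (hxt : CupCap a b x t) (hty : CupCap a b t y) :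
    CupCap a b x y := by
  grind [CupCap]

variable [DecidableEq ι]

open scoped Classical in
lemma card_cupCap_middle [Fintype ι] [Fintype α] {a b : ι} {x y : ι → α} (h : CupCap a b x y) :
    #{t | CupCap a b x t ∧ CupCap a b t y} = Fintype.card α := by
  have hmiddle : ({t | CupCap a b x t ∧ CupCap a b t y} : Finset (ι → α)) =
      univ.image fun c => ({a, b} : Finset ι).piecewise (fun _ => c) x := by
    ext t
    simp only [mem_filter, mem_univ, true_and, mem_image]
    constructor
    · rintro ⟨hxt, -⟩
      refine ⟨t a, funext fun m => ?_⟩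
      simp only [CupCap, piecewise, mem_insert, mem_singleton] at hxt ⊢
      grind
    · rintro ⟨c, rfl⟩
      simp only [CupCap, piecewise, mem_insert, mem_singleton] at h ⊢
      grind
  rw [hmiddle, card_image_of_injective, card_univ]
  intro c c' hc
  simpa using congrFun hc a

lemma CupCap.eq_piecewise_of_disjoint {a b c d : ι} (hac : a ≠ c) (had : a ≠ d) (hbc : b ≠ c)
    (hbd : b ≠ d) {x t z : ι → α} (hxt : CupCap a b x t) (htz : CupCap c d t z) :
    t = ({a, b} : Finset ι).piecewise z x := by
  funext m
  simp only [CupCap, piecewise, mem_insert, mem_singleton] at hxt htz ⊢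
  grind

lemma CupCap.comp_swap_of_disjoint {a b c d : ι} (hac : a ≠ c) (had : a ≠ d) (hbc : b ≠ c)
    (hbd : b ≠ d) {x z : ι → α} (h : Relation.Comp (CupCap a b) (CupCap c d) x z) :
    Relation.Comp (CupCap c d) (CupCap a b) x z := by
  obtain ⟨t, hxt, htz⟩ := h
  refine ⟨({c, d} : Finset ι).piecewise z x, ?_, ?_⟩ <;>
  · simp only [CupCap, piecewise, mem_insert, mem_singleton] at hxt htz ⊢
    grind

lemma CupCap.eq_piecewise_of_comp_left {a b c : ι} (hac : a ≠ c) (hbc : b ≠ c)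
    {x t z : ι → α} (hxt : CupCap a b x t) (htz : CupCap b c t z) :
    t = ({a, b} : Finset ι).piecewise (fun _ => x c) x := by
  funext m
  simp only [CupCap, piecewise, mem_insert, mem_singleton] at hxt htz ⊢
  grind

lemma CupCap.eq_piecewise_of_comp_right {a b c : ι} (hac : a ≠ c) (hbc : b ≠ c)
    {x u y : ι → α} (hxu : Relation.Comp (CupCap a b) (CupCap b c) x u) (huy : CupCap a b u y) :
    u = ({a, b} : Finset ι).piecewise (fun _ => y c) y := by
  obtain ⟨t, hxt, htu⟩ := hxu
  funext m
  simp only [CupCap, piecewise, mem_insert, mem_singleton] at hxt htu huy ⊢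
  grind

lemma cupCap_comp_comp_self {a b c : ι} (hab : a ≠ b) (hac : a ≠ c) (hbc : b ≠ c) :
    Relation.Comp (Relation.Comp (CupCap (α := α) a b) (CupCap b c)) (CupCap a b) = CupCap a b := by
  ext x y
  constructor
  · rintro ⟨u, ⟨t, hxt, htu⟩, huy⟩
    -- at `c`: `x c = t c = t b = t a = u a = u b = u c = y c`
    simp only [CupCap] at hxt htu huy ⊢
    grind
  · intro hxy
    set t := ({a, b} : Finset ι).piecewise (fun _ => x c) x
    refine ⟨t, ⟨t, ?_, ?_⟩, ?_⟩ <;>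
    · simp only [t, CupCap, piecewise, mem_insert, mem_singleton] at hxy ⊢
      grind

end CupCap

section Relations

variable (F : Type*) [Semiring F] {ι α : Type*} [Fintype ι] [DecidableEq ι] [Fintype α]

lemma relMatrix_cupCap_mul_self (a b : ι) :
    relMatrix F (CupCap (α := α) a b) * relMatrix F (CupCap a b) =
      (Fintype.card α : F) • relMatrix F (CupCap a b) := by
  classical
  ext x y
  rw [relMatrix_mul_relMatrix_apply, Matrix.smul_apply, relMatrix_apply]
  split_ifs with h
  · rw [card_cupCap_middle h, smul_eq_mul, mul_one]
  · rw [filter_eq_empty_iff.mpr fun t _ ht => h (ht.1.trans ht.2), card_empty, Nat.cast_zero,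
      smul_zero]

lemma relMatrix_cupCap_mul_comm {a b c d : ι} (hac : a ≠ c) (had : a ≠ d) (hbc : b ≠ c)
    (hbd : b ≠ d) :
    relMatrix F (CupCap (α := α) a b) * relMatrix F (CupCap c d) =
      relMatrix F (CupCap c d) * relMatrix F (CupCap a b) := by
  rw [relMatrix_mul_relMatrix _ fun _ _ _ => CupCap.eq_piecewise_of_disjoint hac had hbc hbd,
    relMatrix_mul_relMatrix _ fun _ _ _ =>
      CupCap.eq_piecewise_of_disjoint hac.symm hbc.symm had.symm hbd.symm]
  congr 1
  ext x z
  exact ⟨CupCap.comp_swap_of_disjoint hac had hbc hbd,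
    CupCap.comp_swap_of_disjoint hac.symm hbc.symm had.symm hbd.symm⟩

lemma relMatrix_cupCap_mul_mul_self {a b c : ι} (hab : a ≠ b) (hac : a ≠ c) (hbc : b ≠ c) :
    relMatrix F (CupCap (α := α) a b) * relMatrix F (CupCap b c) * relMatrix F (CupCap a b) =
      relMatrix F (CupCap a b) := by
  rw [relMatrix_mul_relMatrix _ fun x _ _ => CupCap.eq_piecewise_of_comp_left hac hbc,
    relMatrix_mul_relMatrix _ fun _ _ _ => CupCap.eq_piecewise_of_comp_right hac hbc,
    cupCap_comp_comp_self hab hac hbc]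

lemma relMatrix_cupCap_mul_mul_self' {a b c : ι} (hab : a ≠ b) (hac : a ≠ c) (hbc : b ≠ c) :
    relMatrix F (CupCap (α := α) b c) * relMatrix F (CupCap a b) * relMatrix F (CupCap b c) =
      relMatrix F (CupCap b c) := by
  simpa only [cupCap_comm] using relMatrix_cupCap_mul_mul_self F hbc.symm hac.symm hab.symm

end Relations

end TemperleyLieb

open TemperleyLieb

lemma hMat_apply (F : Type*) [Semiring F] {p n k : ℕ} (h1 : 1 ≤ k) (h2 : k < n)
    (r s : Fin (p ^ n)) :
    hMat F p n k h1 h2 r s = relMatrix F (CupCap ⟨k - 1, by omega⟩ ⟨k, h2⟩)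
      (finFunctionFinEquiv.symm r) (finFunctionFinEquiv.symm s) := by
  have hp : 0 < p := (Nat.pow_pos_iff.mp r.pos).resolve_right (by omega)
  have high_part (x : ℕ) : x / p ^ (k - 1) / (p * p) = x / p ^ (k + 1) := by
    rw [Nat.div_div_eq_div_mul, ← pow_two, ← pow_add]; congr 2; omega
  have digit_k (x : ℕ) : x / p ^ (k - 1) % (p * p) / p = x / p ^ k % p := by
    rw [Nat.mod_mul_right_div_self, Nat.div_div_eq_div_mul, ← pow_succ]; congr 3; omega
  have digit_pred_k (x : ℕ) : x / p ^ (k - 1) % (p * p) % p = x / p ^ (k - 1) % p :=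
    Nat.mod_mul_right_mod _ _ _
  simp only [hMat, reindex_apply, submatrix_apply, kron, Ep, of_apply, mul_apply, one_apply,
    transpose_apply, Fin.sum_univ_one, Fin.ext_iff, Fin.coe_divNat, Fin.coe_modNat,
    finCongr_symm, finCongr_apply, Fin.val_cast, relMatrix_apply, CupCap, Fin.forall_iff,
    finFunctionFinEquiv_symm_apply_val, high_part, digit_k, digit_pred_k, ite_zero_mul_ite_zero, mul_one]
  refine if_congr ?_ rfl rfl
  rw [Nat.div_pow_eq_div_pow_iff hp r.2 s.2, Nat.mod_pow_eq_mod_pow_iff hp]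
  grind

lemma hMat_eq_reindex (F : Type*) [CommSemiring F] {p n k : ℕ} (h1 : 1 ≤ k) (h2 : k < n) :
    hMat F p n k h1 h2 =
      reindexAlgEquiv F F finFunctionFinEquiv (relMatrix F (CupCap ⟨k - 1, by omega⟩ ⟨k, h2⟩)) := by
  ext r s
  rw [hMat_apply, coe_reindexAlgEquiv, reindex_apply, submatrix_apply]

/-- For all `p ≥ 1`, `n ≥ 1` and `1 ≤ i, j ≤ n − 1`, the matrices `h_k^n` satisfy the
Temperley–Lieb relations: `h_i^n h_j^n = h_j^n h_i^n` whenever `|i − j| ≥ 2`;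
`h_i^n h_{i+1}^n h_i^n = h_i^n` and `h_{i+1}^n h_i^n h_{i+1}^n = h_{i+1}^n`; and
`h_i^n h_i^n = p · h_i^n`. -/
theorem hMat_temperley_lieb_relations (F : Type*) [Field F] (p n : ℕ) :
    (∀ (i j : ℕ) (hi1 : 1 ≤ i) (hi2 : i < n) (hj1 : 1 ≤ j) (hj2 : j < n),
      i + 2 ≤ j ∨ j + 2 ≤ i →
      hMat F p n i hi1 hi2 * hMat F p n j hj1 hj2 =
        hMat F p n j hj1 hj2 * hMat F p n i hi1 hi2) ∧
    (∀ (i : ℕ) (h1 : 1 ≤ i) (h2 : i + 1 < n),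
      hMat F p n i h1 (by omega) * hMat F p n (i + 1) (by omega) h2 *
          hMat F p n i h1 (by omega) = hMat F p n i h1 (by omega) ∧
      hMat F p n (i + 1) (by omega) h2 * hMat F p n i h1 (by omega) *
          hMat F p n (i + 1) (by omega) h2 = hMat F p n (i + 1) (by omega) h2) ∧
    (∀ (i : ℕ) (h1 : 1 ≤ i) (h2 : i < n),
      hMat F p n i h1 h2 * hMat F p n i h1 h2 = (p : F) • hMat F p n i h1 h2) := by
  simp only [hMat_eq_reindex, Nat.add_sub_cancel, ← map_mul]
  refine ⟨fun i j _ _ _ _ _ => ?_, fun i _ _ => ⟨?_, ?_⟩, fun i _ _ => ?_⟩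
  · rw [relMatrix_cupCap_mul_comm] <;> simp only [ne_eq, Fin.mk.injEq] <;> omega
  · rw [relMatrix_cupCap_mul_mul_self] <;> simp only [ne_eq, Fin.mk.injEq] <;> omega
  · rw [relMatrix_cupCap_mul_mul_self'] <;> simp only [ne_eq, Fin.mk.injEq] <;> omega
  · rw [relMatrix_cupCap_mul_self, map_smul, Fintype.card_fin]
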